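/- Let f ∈ N_σ(β) with 0 ≤ β < 1, i.e. f bi-univalent with Re f'(z) > β and Re g'(w) > β for the inverse g. Then |a₂a₄ − a₃²| ≤ 2(1−β)²(49/18 − β/3 + |1/4 − (1−β)²/2|). -/

import Mathlib

/-!
Put `F = f'` and `w = (F - 1) / (F + 1 - 2β)`. Since `Re F > β`, the value `F z` is closer to `1`
than to its mirror image `2β - 1`, so `‖w‖ ≤ 1` and Cauchy's estimates give `‖w^(k)(0)‖ ≤ k!`.
For `q = F + 1 - 2β`, the identity `q = 2(1 - β) + w q` and Leibniz's rule bound each Taylor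
coefficient of `q` by the sum of the previous ones, whence `‖F^(n+1)(0)‖ ≤ (n+1)! 2ⁿ 2(1 - β)`,
i.e. `‖a₂‖ ≤ 1 - β`, `‖a₃‖ ≤ 4(1 - β)/3`, `‖a₄‖ ≤ 2(1 - β)`. These crude bounds already give
`‖a₂a₄ - a₃²‖ ≤ 34(1 - β)²/9`, which is below the claimed bound.
-/

open Finset Filter Metric Topology Nat
open scoped NNReal

lemma le_two_pow_mul_of_le_sum_range {c : ℕ → ℝ}
    (h : ∀ n, c (n + 1) ≤ ∑ j ∈ range (n + 1), c j) (n : ℕ) :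
    c (n + 1) ≤ 2 ^ n * c 0 := by
  have hsum : ∀ n, ∑ j ∈ range (n + 1), c j ≤ 2 ^ n * c 0 := by
    intro n
    induction n with
    | zero => simp
    | succ n ih =>
      rw [sum_range_succ, pow_succ]
      linarith [h n]
  exact (h n).trans (hsum n)

lemma iteratedDeriv_mul_div_factorial {𝕜 : Type*} [NontriviallyNormedField 𝕜] [CharZero 𝕜]
    {f g : 𝕜 → 𝕜} {x : 𝕜} {n : ℕ} (hf : ContDiffAt 𝕜 n f x) (hg : ContDiffAt 𝕜 n g x) :
    iteratedDeriv n (f * g) x / n ! = ∑ i ∈ range (n + 1),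
      iteratedDeriv i f x / i ! * (iteratedDeriv (n - i) g x / (n - i)!) := by
  rw [iteratedDeriv_mul hf hg, sum_div]
  refine sum_congr rfl fun i hi => ?_
  have : (n ! : 𝕜) ≠ 0 := cast_ne_zero.mpr n.factorial_ne_zero
  rw [cast_choose 𝕜 (mem_range_succ_iff.mp hi)]
  field_simp

lemma HasFPowerSeriesAt.iteratedDeriv_eq_factorial_mul {𝕜 : Type*} [RCLike 𝕜] {f : 𝕜 → 𝕜}
    {a : ℕ → 𝕜} {x : 𝕜} (hf : HasFPowerSeriesAt f (.ofScalars 𝕜 a) x) (n : ℕ) :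
    iteratedDeriv n f x = n ! * a n := by
  have ha := FormalMultilinearSeries.ofScalars_series_injective 𝕜 𝕜
    (hf.eq_formalMultilinearSeries hf.analyticAt.hasFPowerSeriesAt)
  have : (n ! : 𝕜) ≠ 0 := cast_ne_zero.mpr n.factorial_ne_zero
  rw [congrFun ha n]
  field_simp

lemma hasFPowerSeriesOnBall_ofScalars_of_hasSum {𝕜 : Type*} [RCLike 𝕜] {f : 𝕜 → 𝕜}
    {a : ℕ → 𝕜} {r : ℝ≥0} (hr : 0 < r)
    (hf : ∀ z ∈ ball (0 : 𝕜) r, HasSum (fun n => a n * z ^ n) (f z)) :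
    HasFPowerSeriesOnBall f (.ofScalars 𝕜 a) 0 r where
  r_le := by
    refine ENNReal.le_of_forall_pos_nnreal_lt fun s _ hs => ?_
    apply FormalMultilinearSeries.le_radius_of_summable
    simpa [FormalMultilinearSeries.ofScalars_norm, norm_mul] using
      (hf ((s : ℝ) : 𝕜) (by simpa using hs)).summable.norm
  r_pos := by simpa using hr
  hasSum {y} hy := by
    simpa [FormalMultilinearSeries.ofScalars_apply_eq, mul_comm] using hf y (by simpa using hy)

lemma Complex.norm_iteratedDeriv_le_of_forall_mem_ball_norm_le {f : ℂ → ℂ} {c : ℂ} {R C : ℝ}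
    (n : ℕ) (hR : 0 < R) (hf : DifferentiableOn ℂ f (ball c R))
    (hC : ∀ z ∈ ball c R, ‖f z‖ ≤ C) :
    ‖iteratedDeriv n f c‖ ≤ n ! * C / R ^ n := by
  have hlim : Tendsto (fun r : ℝ => n ! * C / r ^ n) (𝓝[<] R) (𝓝 (n ! * C / R ^ n)) :=
    ((continuousAt_const.div (continuousAt_id.pow n) (pow_ne_zero n hR.ne')).tendsto).mono_left
      nhdsWithin_le_nhds
  refine ge_of_tendsto hlim ?_
  filter_upwards [Ioo_mem_nhdsLT hR] with r ⟨hr0, hrR⟩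
  exact norm_iteratedDeriv_le_of_forall_mem_sphere_norm_le n hr0
    (hf.diffContOnCl_ball (closedBall_subset_ball hrR))
    fun z hz => hC z (sphere_subset_ball hrR hz)

lemma Complex.norm_sub_one_le_norm_one_sub_two_mul_add {β : ℝ} {z : ℂ} (hβ : β ≤ 1)
    (hz : β < z.re) : ‖z - 1‖ ≤ ‖1 - 2 * β + z‖ := by
  rw [← sq_le_sq₀ (norm_nonneg _) (norm_nonneg _), Complex.sq_norm, Complex.sq_norm,
    Complex.normSq_apply, Complex.normSq_apply]
  simp only [sub_re, sub_im, add_re, add_im, mul_re, mul_im, one_re, one_im, ofReal_re,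
    ofReal_im, re_ofNat, im_ofNat]
  nlinarith

lemma norm_iteratedDeriv_succ_le_of_eventuallyEq_const_add_mul {𝕜 : Type*} [RCLike 𝕜]
    {q w : 𝕜 → 𝕜} {x b : 𝕜} (hq : AnalyticAt 𝕜 q x) (hw : AnalyticAt 𝕜 w x) (hwx : w x = 0)
    (hw_le : ∀ k, ‖iteratedDeriv k w x‖ ≤ k !) (hqw : q =ᶠ[𝓝 x] fun z => b + w z * q z)
    (n : ℕ) : ‖iteratedDeriv (n + 1) q x‖ ≤ (n + 1)! * 2 ^ n * ‖q x‖ := by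
  set c : ℕ → ℝ := fun k => ‖iteratedDeriv k q x‖ / (k ! : ℝ)
  have hrec : ∀ n, c (n + 1) ≤ ∑ j ∈ range (n + 1), c j := by
    intro n
    have hq' : iteratedDeriv (n + 1) q x = iteratedDeriv (n + 1) (w * q) x := by
      rw [(hqw.iteratedDeriv (n + 1)).eq_of_nhds, iteratedDeriv_const_add n.succ_pos]
      rfl
    have hleib := iteratedDeriv_mul_div_factorial (n := n + 1) hw.contDiffAt hq.contDiffAt
    rw [← hq', sum_range_succ', iteratedDeriv_zero, hwx, zero_div, zero_mul, add_zero] at hleib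
    calc c (n + 1) = ‖iteratedDeriv (n + 1) q x / (n + 1)!‖ := by
          rw [norm_div, RCLike.norm_natCast]
      _ ≤ ∑ i ∈ range (n + 1), c (n - i) := by
          rw [hleib]
          refine norm_sum_le_of_le _ fun i _ => ?_
          have hwi : ‖iteratedDeriv (i + 1) w x / (i + 1)!‖ ≤ 1 := by
            rw [norm_div, RCLike.norm_natCast, div_le_one (by positivity)]
            exact hw_le _
          rw [norm_mul, Nat.add_sub_add_right]
          calc _ ≤ 1 * ‖iteratedDeriv (n - i) q x / (n - i)!‖ := by gcongr
            _ = c (n - i) := by rw [one_mul, norm_div, RCLike.norm_natCast]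
      _ = ∑ j ∈ range (n + 1), c j := sum_range_reflect c (n + 1)
  have := le_two_pow_mul_of_le_sum_range hrec n
  simp only [c, factorial_zero, cast_one, div_one, iteratedDeriv_zero] at this
  rwa [div_le_iff₀ (by positivity), mul_comm, ← mul_assoc] at this

lemma norm_iteratedDeriv_succ_le_of_re_gt {F : ℂ → ℂ} {β : ℝ}
    (hF : DifferentiableOn ℂ F (ball 0 1)) (hF0 : F 0 = 1)
    (hre : ∀ z ∈ ball (0 : ℂ) 1, β < (F z).re) (n : ℕ) :
    ‖iteratedDeriv (n + 1) F 0‖ ≤ (n + 1)! * 2 ^ n * (2 * (1 - β)) := by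
  have hβ : β < 1 := by simpa [hF0] using hre 0 (mem_ball_self one_pos)
  have hball : ball (0 : ℂ) 1 ∈ 𝓝 0 := isOpen_ball.mem_nhds (mem_ball_self one_pos)
  set q : ℂ → ℂ := fun z => 1 - 2 * β + F z
  have hq_ne : ∀ z ∈ ball (0 : ℂ) 1, q z ≠ 0 := by
    intro z hz hqz
    have := congrArg Complex.re hqz
    simp only [q, Complex.add_re, Complex.sub_re, Complex.mul_re] at this
    norm_num at this
    linarith [hre z hz]
  set w : ℂ → ℂ := fun z => (F z - 1) / q z
  have hqd : DifferentiableOn ℂ q (ball 0 1) := hF.const_add _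
  have hwd : DifferentiableOn ℂ w (ball 0 1) := (hF.sub_const 1).div hqd hq_ne
  have hw_le : ∀ z ∈ ball (0 : ℂ) 1, ‖w z‖ ≤ 1 := fun z hz => by
    rw [norm_div, div_le_one (norm_pos_iff.mpr (hq_ne z hz))]
    exact Complex.norm_sub_one_le_norm_one_sub_two_mul_add hβ.le (hre z hz)
  have hw_coeff (k : ℕ) : ‖iteratedDeriv k w 0‖ ≤ k ! := by
    simpa using Complex.norm_iteratedDeriv_le_of_forall_mem_ball_norm_le k one_pos hwd hw_le
  have hqw : q =ᶠ[𝓝 0] fun z => 2 * (1 - β) + w z * q z := by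
    filter_upwards [hball] with z hz
    simp only [w, div_mul_cancel₀ _ (hq_ne z hz), q]
    ring
  have hq0 : ‖q 0‖ = 2 * (1 - β) := by
    rw [show q 0 = ((2 * (1 - β) : ℝ) : ℂ) by simp [q, hF0]; ring, Complex.norm_real,
      Real.norm_of_nonneg (by linarith)]
  have := norm_iteratedDeriv_succ_le_of_eventuallyEq_const_add_mul (hqd.analyticAt hball)
    (hwd.analyticAt hball) (by simp [w, hF0]) hw_coeff hqw n
  rwa [iteratedDeriv_const_add n.succ_pos, hq0] at this

lemma norm_coeff_le_of_re_deriv_gt {f : ℂ → ℂ} {a : ℕ → ℂ} {β : ℝ}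
    (hfd : DifferentiableOn ℂ f (ball 0 1))
    (hfs : ∀ z ∈ ball (0 : ℂ) 1, HasSum (fun n => a n * z ^ n) (f z)) (ha1 : a 1 = 1)
    (hre : ∀ z ∈ ball (0 : ℂ) 1, β < (deriv f z).re) (n : ℕ) :
    ‖a (n + 2)‖ ≤ 2 ^ (n + 1) * (1 - β) / (n + 2) := by
  have hcoef := (hasFPowerSeriesOnBall_ofScalars_of_hasSum (f := f) one_pos
    (by simpa using hfs)).hasFPowerSeriesAt.iteratedDeriv_eq_factorial_mul
  have hf'd : DifferentiableOn ℂ (deriv f) (ball 0 1) :=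
    (hfd.analyticOnNhd isOpen_ball).deriv.differentiableOn
  have hf'0 : deriv f 0 = 1 := by simpa [ha1] using hcoef 1
  have hbound := norm_iteratedDeriv_succ_le_of_re_gt hf'd hf'0 hre n
  rw [← iteratedDeriv_succ', hcoef, norm_mul, RCLike.norm_natCast, factorial_succ (n + 1),
    cast_mul] at hbound
  push_cast at hbound
  rw [le_div_iff₀ (by positivity)]
  refine le_of_mul_le_mul_left ?_ (by positivity : (0 : ℝ) < (n + 1)!)
  linear_combination hbound

theorem hankel_bound_N_beta_general (β : ℝ) (hβ1 : β < 1)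
    (f : ℂ → ℂ) (a : ℕ → ℂ)
    (hfd : DifferentiableOn ℂ f (Metric.ball (0 : ℂ) 1))
    (hfs : ∀ z ∈ Metric.ball (0 : ℂ) 1, HasSum (fun n : ℕ => a n * z ^ n) (f z))
    (ha1 : a 1 = 1)
    (hre1 : ∀ z ∈ Metric.ball (0 : ℂ) 1, β < (deriv f z).re) :
    ‖a 2 * a 4 - (a 3) ^ 2‖ ≤
      2 * (1 - β) ^ 2 * (49 / 18 - β / 3 + |1 / 4 - (1 - β) ^ 2 / 2|) := by
  have hcoef := norm_coeff_le_of_re_deriv_gt hfd hfs ha1 hre1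
  have ha2 : ‖a 2‖ ≤ 1 - β := by simpa using hcoef 0
  have ha3 : ‖a 3‖ ≤ 4 * (1 - β) / 3 := (hcoef 1).trans_eq (by ring)
  have ha4 : ‖a 4‖ ≤ 2 * (1 - β) := (hcoef 2).trans_eq (by ring)
  calc ‖a 2 * a 4 - a 3 ^ 2‖ ≤ ‖a 2‖ * ‖a 4‖ + ‖a 3‖ ^ 2 := by
        rw [← norm_mul, ← norm_pow]
        exact norm_sub_le _ _
    _ ≤ (1 - β) * (2 * (1 - β)) + (4 * (1 - β) / 3) ^ 2 := by gcongr
    _ ≤ 2 * (1 - β) ^ 2 * (49 / 18 - β / 3 + |1 / 4 - (1 - β) ^ 2 / 2|) := by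
        nlinarith [abs_nonneg (1 / 4 - (1 - β) ^ 2 / 2), sq_nonneg (1 - β)]

/-- Corrected bound for the class `N_σ(β)` (`Çağlar et al.`, Theorem 2): if `f` is
bi-univalent with `Re f' > β` and `Re g' > β` for the inverse `g`, `0 ≤ β < 1`, then
`|a₂a₄ - a₃²| ≤ 2(1-β)²(49/18 - β/3 + |1/4 - (1-β)²/2|)`. -/
theorem hankel_bound_N_beta (β : ℝ) (hβ0 : 0 ≤ β) (hβ1 : β < 1)
    (f g : ℂ → ℂ) (a : ℕ → ℂ)
    (hfd : DifferentiableOn ℂ f (Metric.ball (0 : ℂ) 1))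
    (hfinj : Set.InjOn f (Metric.ball (0 : ℂ) 1))
    (hfs : ∀ z ∈ Metric.ball (0 : ℂ) 1, HasSum (fun n : ℕ => a n * z ^ n) (f z))
    (ha0 : a 0 = 0) (ha1 : a 1 = 1)
    (hgd : DifferentiableOn ℂ g (Metric.ball (0 : ℂ) 1))
    (hginj : Set.InjOn g (Metric.ball (0 : ℂ) 1))
    (hinv : ∃ r > (0 : ℝ), ∀ z ∈ Metric.ball (0 : ℂ) r, g (f z) = z)
    (hre1 : ∀ z ∈ Metric.ball (0 : ℂ) 1, β < (deriv f z).re)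
    (hre2 : ∀ w ∈ Metric.ball (0 : ℂ) 1, β < (deriv g w).re) :
    ‖a 2 * a 4 - (a 3) ^ 2‖ ≤
      2 * (1 - β) ^ 2 * (49 / 18 - β / 3 + |1 / 4 - (1 - β) ^ 2 / 2|) :=
  hankel_bound_N_beta_general β hβ1 f a hfd hfs ha1 hre1
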